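/- arXiv:2008.08822 — 6 statements merged into one kernel-verified Lean document; each statement's English description precedes it below -/
import Mathlib

section
/- Let P, Q ∈ R[x] with Q(0) invertible, and write P(x)Q(-x) = U_e(x²) + x·U_o(x²) for its even and odd parts, and Q(x)Q(-x) = V(x²). Then for every N ≥ 0, the coefficient of x^N in the power series P(x)/Q(x) equals the coefficient of x^{N/2} in U_e(x)/V(x) if N is even, and the coefficient of x^{(N-1)/2} in U_o(x)/V(x) if N is odd. -/
/-!
Multiplying numerator and denominator by `Q(-x)` makes the denominator even:
`P(x)/Q(x) = (U_e(x²) + x U_o(x²)) / V(x²)`. As `V(x²)` has the invertible constant term `Q(0)²`,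
this gives `F = G_e(x²) + x G_o(x²)`, whose coefficients split by parity.
-/

open Polynomial PowerSeries

namespace PowerSeries

variable {R : Type*} [CommRing R]

theorem expand_coe (p : ℕ) (hp : p ≠ 0) (W : R[X]) :
    expand p hp (W : R⟦X⟧) = (Polynomial.expand R p W : R⟦X⟧) := by
  ext n
  rw [Polynomial.coeff_coe, Polynomial.coeff_expand (Nat.pos_of_ne_zero hp), coeff_expand,
    Polynomial.coeff_coe]

theorem coeff_expand_two_add_X_mul_expand_two (A B : R⟦X⟧) (N : ℕ) :
    coeff N (expand 2 two_ne_zero A + X * expand 2 two_ne_zero B) =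
      if Even N then coeff (N / 2) A else coeff (N / 2) B := by
  rcases N with _ | m
  · simp
  · rw [map_add, coeff_succ_X_mul, coeff_expand, coeff_expand]
    simp only [Nat.even_iff, Nat.dvd_iff_mod_eq_zero]
    by_cases hm : m % 2 = 0
    · rw [if_neg (by omega), if_pos hm, if_neg (by omega), zero_add,
        show (m + 1) / 2 = m / 2 by omega]
    · rw [if_pos (by omega), if_neg hm, if_pos (by omega), add_zero]

end PowerSeries

theorem stmt_2 {R : Type*} [CommRing R] (P Q Ue Uo V : Polynomial R)
    (hQ0 : IsUnit (Q.coeff 0))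
    (hU : P * Q.comp (-Polynomial.X)
        = Ue.comp (Polynomial.X ^ 2) + Polynomial.X * Uo.comp (Polynomial.X ^ 2))
    (hV : Q * Q.comp (-Polynomial.X) = V.comp (Polynomial.X ^ 2))
    (F Ge Go : PowerSeries R)
    (hF : (Q : PowerSeries R) * F = (P : PowerSeries R))
    (hGe : (V : PowerSeries R) * Ge = (Ue : PowerSeries R))
    (hGo : (V : PowerSeries R) * Go = (Uo : PowerSeries R)) :
    ∀ N : ℕ, PowerSeries.coeff N F =
      if Even N then PowerSeries.coeff (N / 2) Ge
      else PowerSeries.coeff (N / 2) Go := by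
  simp only [← expand_eq_comp_X_pow] at hU hV
  have hV0 : V.coeff 0 = Q.coeff 0 * Q.coeff 0 := by
    simpa [coeff_zero_eq_eval_zero] using congrArg (eval 0) hV.symm
  have hVunit : IsUnit (PowerSeries.expand 2 two_ne_zero (V : R⟦X⟧)) :=
    (isUnit_iff_constantCoeff.mpr (by simpa [hV0] using hQ0.mul hQ0)).map _
  have hF_eq : F = PowerSeries.expand 2 two_ne_zero Ge
      + PowerSeries.X * PowerSeries.expand 2 two_ne_zero Go := by
    refine hVunit.mul_left_cancel ?_
    calc PowerSeries.expand 2 two_ne_zero (V : R⟦X⟧) * F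
        = (Q.comp (-Polynomial.X) : R⟦X⟧) * (Q * F) := by
          rw [expand_coe, ← hV, Polynomial.coe_mul]; ring
      _ = (P * Q.comp (-Polynomial.X) : R[X]) := by rw [hF, Polynomial.coe_mul, mul_comm]
      _ = _ := by
          rw [hU]
          push_cast
          rw [← expand_coe 2 two_ne_zero, ← expand_coe 2 two_ne_zero, ← hGe, ← hGo,
            map_mul, map_mul]
          ring
  intro N
  rw [hF_eq, coeff_expand_two_add_X_mul_expand_two]
end

section
/- Let Γ ∈ R[x] be monic of degree d with Γ(0) invertible, let Q(x) = x^d Γ(1/x) be its reversal, and let Σ a_i x^i be the power series 1/Q. For N ≥ d, write x^N = L(x)·Γ(x) + ρ(x) with deg ρ < d, ρ(x) = Σ r_i x^i. Then v(x) := (Σ_{i=0}^{d-1} a_{N-d+1+i} x^i) · Q(x) mod x^d satisfies v(x) = x^{d-1} ρ(1/x), i.e., v_i = r_{d-1-i} for 0 ≤ i ≤ d-1. -/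
/-!
Reflecting `x ^ N = Γ L + ρ` at degree `N` gives `1 = Q L̃ + x ^ (N + 1 - d) ρ̃`
with `deg L̃ ≤ N - d` and `ρ̃ = x ^ (d - 1) ρ(1/x)`. Multiplying by `1/Q`, the coefficients
of `1/Q` from `N + 1 - d` on are those of `ρ̃ / Q`; truncating that series below degree `d` and
multiplying by `Q` gives back `ρ̃` modulo `x ^ d`, which is `ρ̃` itself.
-/

open Polynomial PowerSeries

namespace Polynomial

variable {R : Type*} [CommRing R]

theorem reflect_eq_reflect_mul_X_pow {p : R[X]} {m n : ℕ} (hp : p.natDegree ≤ m)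
    (hmn : m ≤ n) :
    p.reflect n = p.reflect m * X ^ (n - m) := by
  have h := reflect_mul p 1 hp (natDegree_one.trans_le (Nat.zero_le (n - m)))
  rwa [mul_one, reflect_one, Nat.add_sub_cancel' hmn] at h

theorem reflect_eq_reverse_mul_reflect_divByMonic_add {Γ p : R[X]} {d N : ℕ} (hmon : Γ.Monic)
    (hdeg : Γ.natDegree = d) (hd : 0 < d) (hpN : p.natDegree ≤ N) (hdN : d ≤ N) :
    p.reflect N =
      Γ.reverse * (p /ₘ Γ).reflect (N - d) + X ^ (N + 1 - d) * (p %ₘ Γ).reflect (d - 1) := by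
  have hΓ : Γ ≠ 1 := by rintro rfl; simp at hdeg; omega
  have hquot : (p /ₘ Γ).natDegree ≤ N - d := by
    rw [natDegree_divByMonic _ hmon, hdeg]; omega
  have hrem : (p %ₘ Γ).natDegree ≤ d - 1 := by
    have := natDegree_modByMonic_lt p hmon hΓ; omega
  have hmul : (Γ * (p /ₘ Γ)).reflect N = Γ.reverse * (p /ₘ Γ).reflect (N - d) := by
    rw [reverse, hdeg, ← reflect_mul _ _ hdeg.le hquot, Nat.add_sub_cancel' hdN]
  conv_lhs => rw [← modByMonic_add_div p Γ]
  rw [reflect_add, hmul, reflect_eq_reflect_mul_X_pow hrem (by omega : d - 1 ≤ N),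
    show N - (d - 1) = N + 1 - d by omega]
  ring

end Polynomial

namespace PowerSeries

variable {R : Type*} [CommRing R]

theorem coeff_trunc_mul_of_lt {i n : ℕ} (f g : R⟦X⟧) (h : i < n) :
    coeff i ((trunc n f : R⟦X⟧) * g) = coeff i (f * g) := by
  conv_rhs => rw [eq_X_pow_mul_shift_add_trunc n f]
  rw [add_mul, mul_assoc, map_add, coeff_X_pow_mul', if_neg (by omega), zero_add]

theorem coeff_add_eq_coeff_mul_of_mul_add_X_pow_mul_eq_one {Q A S : R⟦X⟧} {P : R[X]} {k : ℕ}
    (hA : Q * A = 1) (h : Q * (P : R⟦X⟧) + PowerSeries.X ^ k * S = 1) (hP : P.natDegree < k)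
    (j : ℕ) :
    coeff (k + j) A = coeff j (S * A) := by
  have hA' : A = (P : R⟦X⟧) + PowerSeries.X ^ k * (S * A) := by
    calc A = (Q * (P : R⟦X⟧) + PowerSeries.X ^ k * S) * A := by rw [h, one_mul]
      _ = (P : R⟦X⟧) * (Q * A) + PowerSeries.X ^ k * (S * A) := by ring
      _ = (P : R⟦X⟧) + PowerSeries.X ^ k * (S * A) := by rw [hA, mul_one]
  conv_lhs => rw [hA']
  rw [map_add, Polynomial.coeff_coe, Polynomial.coeff_eq_zero_of_natDegree_lt (by omega),
    zero_add, add_comm, coeff_X_pow_mul]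

end PowerSeries

theorem stmt_9_general {R : Type*} [CommRing R] (Γ : Polynomial R) (d N : ℕ)
    (hmon : Γ.Monic) (hdeg : Γ.natDegree = d)
    (hN : d ≤ N)
    (A : PowerSeries R) (hA : (Γ.reverse : PowerSeries R) * A = 1) :
    ∀ i < d,
      ((∑ j ∈ Finset.range d,
          Polynomial.C (PowerSeries.coeff (N + 1 - d + j) A) * Polynomial.X ^ j)
        * Γ.reverse).coeff i
      = (Polynomial.X ^ N %ₘ Γ).coeff (d - 1 - i) := by
  intro i hi
  set q := (Polynomial.X ^ N /ₘ Γ : R[X]).reflect (N - d)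
  set r := (Polynomial.X ^ N %ₘ Γ : R[X]).reflect (d - 1)
  have hkey : Γ.reverse * q + Polynomial.X ^ (N + 1 - d) * r = 1 := by
    rw [← reflect_eq_reverse_mul_reflect_divByMonic_add hmon hdeg (by omega)
      (natDegree_X_pow_le N) hN, reflect_monomial, revAt_le le_rfl, Nat.sub_self, pow_zero]
  have hq : q.natDegree < N + 1 - d := by
    have : q.natDegree ≤ max (N - d) (Polynomial.X ^ N /ₘ Γ).natDegree := natDegree_reflect_le
    have := natDegree_divByMonic (Polynomial.X ^ N) hmon
    have := natDegree_X_pow_le (R := R) N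
    omega
  have hshift := coeff_add_eq_coeff_mul_of_mul_add_X_pow_mul_eq_one hA
    (S := (r : R⟦X⟧)) (by simpa using congrArg ((↑) : R[X] → R⟦X⟧) hkey) hq
  have hsum : ∑ j ∈ Finset.range d,
      Polynomial.C (PowerSeries.coeff (N + 1 - d + j) A) * Polynomial.X ^ j =
        trunc d ((r : R⟦X⟧) * A) := by
    simp only [trunc_apply, hshift, Finset.range_eq_Ico, C_mul_X_pow_eq_monomial]
  calc _ = PowerSeries.coeff i
          ((trunc d ((r : R⟦X⟧) * A) : R⟦X⟧) * (Γ.reverse : R⟦X⟧)) := by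
        rw [hsum, ← Polynomial.coeff_coe, Polynomial.coe_mul]
    _ = PowerSeries.coeff i ((r : R⟦X⟧) * ((Γ.reverse : R⟦X⟧) * A)) := by
        rw [coeff_trunc_mul_of_lt _ _ hi, mul_comm (Γ.reverse : R⟦X⟧), mul_assoc]
    _ = _ := by rw [hA, mul_one, Polynomial.coeff_coe, coeff_reflect, revAt_le (by omega)]

theorem stmt_9 {R : Type*} [CommRing R] (Γ : Polynomial R) (d N : ℕ)
    (hd : 1 ≤ d) (hmon : Γ.Monic) (hdeg : Γ.natDegree = d)
    (hunit : IsUnit (Γ.coeff 0)) (hN : d ≤ N)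
    (A : PowerSeries R) (hA : (Γ.reverse : PowerSeries R) * A = 1) :
    ∀ i < d,
      ((∑ j ∈ Finset.range d,
          Polynomial.C (PowerSeries.coeff (N + 1 - d + j) A) * Polynomial.X ^ j)
        * Γ.reverse).coeff i
      = (Polynomial.X ^ N %ₘ Γ).coeff (d - 1 - i) :=
  stmt_9_general Γ d N hmon hdeg hN A hA
end

section
/- Let Γ ∈ R[x] be monic of degree d, Q(x) = x^d Γ(1/x), and 1/Q = Σ a_i x^i in R[[x]]. Then x^N mod Γ(x) = Σ_{i=0}^{d-1} r_i x^i where the row vector (r_0, ..., r_{d-1}) satisfies (a_N, ..., a_{N+d-1}) = (r_0, ..., r_{d-1}) · H, with H the d×d Hankel matrix H_{ij} = a_{i+j}. -/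
/-!
Write `a n` for the coefficients of `A = 1 / Γ.reverse`. Comparing coefficients of degree
`> 0` in `Γ.reverse * A = 1` gives the linear recurrence `∑ₖ Γₖ a (k + m) = 0`, i.e. the
linear form `P ↦ ∑ₖ Pₖ a (k + j)` on `R[X]` kills `Γ * X ^ m` for every `m`, hence the whole
ideal `(Γ)`. So it takes the same value on `X ^ N` and on `X ^ N %ₘ Γ`, which is the claim.
-/

open Polynomial Finset

section SeqPairing

variable {R : Type*} [CommRing R]

noncomputable def seqPairing (a : ℕ → R) : R[X] →ₗ[R] R :=
  Polynomial.lsum fun k => LinearMap.mulRight R (a k)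

theorem seqPairing_monomial (a : ℕ → R) (n : ℕ) (c : R) :
    seqPairing a (monomial n c) = c * a n := by
  simp [seqPairing]

theorem seqPairing_X_pow (a : ℕ → R) (n : ℕ) : seqPairing a (X ^ n) = a n := by
  rw [X_pow_eq_monomial, seqPairing_monomial, one_mul]

theorem seqPairing_eq_sum_range (a : ℕ → R) {p : R[X]} {n : ℕ} (hp : p.natDegree < n) :
    seqPairing a p = ∑ k ∈ range n, p.coeff k * a k :=
  sum_over_range' p (f := fun k c => c * a k) (fun _ => zero_mul _) n hp

theorem seqPairing_mul_X_pow (a : ℕ → R) (p : R[X]) (m : ℕ) :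
    seqPairing a (p * X ^ m) = seqPairing (fun n => a (n + m)) p := by
  induction p using Polynomial.induction_on' with
  | add p q hp hq => rw [add_mul, map_add, map_add, hp, hq]
  | monomial n c => rw [X_pow_eq_monomial, monomial_mul_monomial, mul_one,
      seqPairing_monomial, seqPairing_monomial]

theorem seqPairing_mul_eq_zero {a : ℕ → R} {p : R[X]}
    (hp : ∀ m, seqPairing (fun n => a (n + m)) p = 0) (q : R[X]) :
    seqPairing a (p * q) = 0 := by
  induction q using Polynomial.induction_on' with
  | add q r hq hr => rw [mul_add, map_add, hq, hr, add_zero]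
  | monomial n c =>
    rw [← C_mul_X_pow_eq_monomial, mul_left_comm, ← Polynomial.smul_eq_C_mul, map_smul,
      seqPairing_mul_X_pow, hp, smul_zero]

theorem seqPairing_modByMonic {a : ℕ → R} {q : R[X]}
    (hq : ∀ m, seqPairing (fun n => a (n + m)) q = 0) (p : R[X]) :
    seqPairing a (p %ₘ q) = seqPairing a p := by
  conv_rhs => rw [← modByMonic_add_div p q]
  rw [map_add, seqPairing_mul_eq_zero hq, add_zero]

end SeqPairing

theorem coeff_reverse_mul_eq_seqPairing {R : Type*} [CommRing R] (Γ : R[X]) (A : PowerSeries R)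
    (m : ℕ) :
    PowerSeries.coeff (Γ.natDegree + m) ((Γ.reverse : PowerSeries R) * A) =
      seqPairing (fun n => PowerSeries.coeff (n + m) A) Γ := by
  set d := Γ.natDegree
  rw [seqPairing_eq_sum_range _ (Nat.lt_succ_self d), PowerSeries.coeff_mul,
    Nat.sum_antidiagonal_eq_sum_range_succ_mk]
  have hhigh : ∀ k ∈ range (d + m).succ, k ∉ range d.succ →
      PowerSeries.coeff k (Γ.reverse : PowerSeries R) * PowerSeries.coeff (d + m - k) A = 0 := by
    intro k _ hk
    rw [Polynomial.coeff_coe, coeff_reverse, revAt_eq_self_of_lt (by simpa using hk),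
      coeff_eq_zero_of_natDegree_lt (by simpa using hk), zero_mul]
  rw [← sum_subset (range_subset_range.2 (by omega)) hhigh, ← sum_range_reflect]
  refine sum_congr rfl fun k hk_mem => ?_
  have hk : k ≤ d := Nat.lt_succ_iff.1 (mem_range.1 hk_mem)
  rw [Polynomial.coeff_coe, coeff_reverse, revAt_le (by omega), Nat.succ_sub_one,
    Nat.sub_sub_self hk, show d + m - (d - k) = k + m by omega]

theorem stmt_10_general {R : Type*} [CommRing R] (Γ : Polynomial R) (d N : ℕ)
    (hmon : Γ.Monic) (hdeg : Γ.natDegree = d)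
    (A : PowerSeries R) (hA : (Γ.reverse : PowerSeries R) * A = 1) :
    ∀ j : Fin d,
      PowerSeries.coeff (R := R) (N + j) A =
        ∑ i : Fin d, (Polynomial.X ^ N %ₘ Γ).coeff i * PowerSeries.coeff (R := R) (i + j) A := by
  intro j
  have hΓ : Γ ≠ 1 := by
    rintro rfl
    rw [natDegree_one] at hdeg
    exact (j.pos.ne' hdeg.symm).elim
  have hrec : ∀ m, seqPairing (fun n => PowerSeries.coeff (n + m + j) A) Γ = 0 := by
    intro m
    have h := coeff_reverse_mul_eq_seqPairing Γ A (m + j)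
    simp only [← add_assoc] at h
    rw [← h, hA, PowerSeries.coeff_one, if_neg (by omega)]
  calc PowerSeries.coeff (N + j) A
      = seqPairing (fun n => PowerSeries.coeff (n + j) A) (X ^ N) := by rw [seqPairing_X_pow]
    _ = seqPairing (fun n => PowerSeries.coeff (n + j) A) (X ^ N %ₘ Γ) := by
        rw [seqPairing_modByMonic hrec]
    _ = ∑ i ∈ range d, (X ^ N %ₘ Γ).coeff i * PowerSeries.coeff (i + j) A :=
        seqPairing_eq_sum_range _ (hdeg ▸ natDegree_modByMonic_lt _ hmon hΓ)
    _ = _ := (Fin.sum_univ_eq_sum_range _ d).symm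

theorem stmt_10 {R : Type*} [CommRing R] (Γ : Polynomial R) (d N : ℕ)
    (hd : 1 ≤ d) (hmon : Γ.Monic) (hdeg : Γ.natDegree = d)
    (A : PowerSeries R) (hA : (Γ.reverse : PowerSeries R) * A = 1) :
    ∀ j : Fin d,
      PowerSeries.coeff (R := R) (N + j) A =
        ∑ i : Fin d, (Polynomial.X ^ N %ₘ Γ).coeff i * PowerSeries.coeff (R := R) (i + j) A :=
  stmt_10_general Γ d N hmon hdeg A hA
end

section
/- Let Γ ∈ R[x] be monic of degree d, Q(x) = x^d Γ(1/x) its reversal, and a_i the coefficients of 1/Q ∈ R[[x]]. Then the determinant of the d×d Hankel matrix H = (a_{i+j})_{0≤i,j≤d-1} equals ±Γ(0)^{d-1}; in particular H is invertible whenever Γ(0) is a unit. -/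
/-!
Let `Q = Γ.reverse`, so `Q A = 1` and `Q` has degree `≤ d = n + 1`. Multiplying the Hankel matrix
`H = (a_{i+j})` on the left by the unitriangular Toeplitz matrix `(q_{i-j})` of `Q` computes truncated
convolutions `∑_{t ≤ i} q_t a_{i+k-t}`. Since the full convolution is `δ_{i+k,0}`, the first column
becomes `e₀`, and the remaining `n × n` block is `-(q_{i+j+2})_{i,j} · (a_{k-j})_{j,k}`, a Hankel
matrix times a unitriangular one. The Hankel matrix `(q_{i+j+2})` vanishes below its antidiagonal,
on which every entry is `q_d = Γ(0)`; reversing its columns makes it triangular, at the cost of the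
sign `(-1)^{n(n-1)/2}` of the reversal.
-/

open Polynomial PowerSeries Finset Equiv

theorem Fin.sign_revPerm : ∀ n : ℕ,
    Perm.sign (Fin.revPerm : Perm (Fin n)) = (-1) ^ (n * (n - 1) / 2)
  | 0 => rfl
  | n + 1 => by
    have hrot : finRotate (n + 1) * Fin.revPerm = Perm.decomposeFin.symm (0, Fin.revPerm) := by
      ext i
      refine Fin.cases ?_ (fun x => ?_) i
      · simp
      · simp [Fin.rev_succ, Fin.val_rev]
    have hsign := congrArg Perm.sign hrot
    rw [map_mul, sign_finRotate, Nat.succ_sub_one, Perm.decomposeFin.symm_sign, if_pos rfl, one_mul,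
      Fin.sign_revPerm n, ← Int.units_inv_eq_self ((-1) ^ n), ← eq_inv_mul_iff_mul_eq,
      inv_inv] at hsign
    rw [Nat.triangle_succ, pow_add, hsign, mul_comm]

namespace Matrix

variable {R : Type*} [CommRing R]

def hankel (a : ℕ → R) (n : ℕ) : Matrix (Fin n) (Fin n) R :=
  of fun i j => a (i + j)

def lowerToeplitz (f : ℕ → R) (n : ℕ) : Matrix (Fin n) (Fin n) R :=
  of fun i j => if (j : ℕ) ≤ i then f (i - j) else 0

theorem det_hankel_of_eq_zero {a : ℕ → R} {n : ℕ} (ha : ∀ m, n ≤ m → a m = 0) :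
    (hankel a n).det = (-1) ^ (n * (n - 1) / 2) * a (n - 1) ^ n := by
  have htri : ((hankel a n).submatrix id Fin.revPerm).IsUpperTriangular := fun i j hji => by
    simp only [submatrix_apply, id, hankel, of_apply, Fin.revPerm_apply, Fin.val_rev]
    exact ha _ (by have : (j : ℕ) < i := hji; omega)
  have hperm := det_permute' Fin.revPerm (hankel a n)
  rw [det_of_isUpperTriangular htri, Fin.sign_revPerm] at hperm
  have hdiag : ∀ i : Fin n, (hankel a n).submatrix id Fin.revPerm i i = a (n - 1) := fun i => by
    simp only [hankel, submatrix_apply, id_eq, Fin.revPerm_apply, of_apply, Fin.val_rev]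
    congr 1; omega
  simp only [hdiag, prod_const, card_univ, Fintype.card_fin] at hperm
  push_cast at hperm
  rw [hperm, ← mul_assoc, ← mul_pow, neg_one_mul, neg_neg, one_pow, one_mul]

theorem det_lowerToeplitz (f : ℕ → R) (n : ℕ) : (lowerToeplitz f n).det = f 0 ^ n := by
  rw [det_of_isLowerTriangular (lowerToeplitz f n) fun i j hij => if_neg (not_le.2 hij)]
  simp [lowerToeplitz]

theorem sum_lowerToeplitz_mul {n : ℕ} (f g : ℕ → R) (i : Fin n) :
    ∑ j, lowerToeplitz f n i j * g j = ∑ t ∈ range (i + 1), f t * g (i - t) := by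
  simp only [lowerToeplitz, of_apply, ite_mul, zero_mul]
  rw [Fin.sum_univ_eq_sum_range (fun j => if j ≤ (i : ℕ) then f (i - j) * g j else 0),
    ← sum_filter, show (range n).filter (· ≤ (i : ℕ)) = range (i + 1) by ext; simp; omega,
    ← sum_range_reflect]
  refine sum_congr rfl fun t ht => ?_
  rw [mem_range] at ht
  congr 2; omega

theorem det_eq_det_submatrix_succ_of_col_zero {n : ℕ} (M : Matrix (Fin (n + 1)) (Fin (n + 1)) R)
    (hM : ∀ i, M i 0 = if i = 0 then 1 else 0) :
    M.det = (M.submatrix Fin.succ Fin.succ).det := by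
  rw [det_succ_column_zero, Fin.sum_univ_succ]
  simp [hM, Fin.succ_ne_zero]

end Matrix

namespace PowerSeries

open Matrix

variable {R : Type*} [CommRing R] {Q A : R⟦X⟧}

theorem sum_range_coeff_mul_add_sum_range (h : Q * A = 1) (i k : ℕ) :
    ∑ t ∈ range (i + 1), coeff t Q * coeff (i + k - t) A
      + ∑ t ∈ range k, coeff t A * coeff (i + k - t) Q = if i + k = 0 then 1 else 0 := by
  have hcoeff := congrArg (coeff (i + k)) h
  rw [coeff_mul, coeff_one, Nat.sum_antidiagonal_eq_sum_range_succ_mk,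
    show (i + k).succ = i + 1 + k by omega, sum_range_add, ← sum_range_reflect _ k] at hcoeff
  dsimp only at hcoeff
  rw [← hcoeff]
  congr 1
  refine sum_congr rfl fun t ht => ?_
  rw [mem_range] at ht
  rw [mul_comm, show i + 1 + (k - 1 - t) = i + k - t by omega,
    show i + k - (i + k - t) = t by omega]

theorem lowerToeplitz_mul_hankel_apply_zero (h : Q * A = 1) {n : ℕ} (i : Fin (n + 1)) :
    (lowerToeplitz (coeff · Q) (n + 1) * hankel (coeff · A) (n + 1)) i 0
      = if i = 0 then 1 else 0 := by
  rw [mul_apply]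
  simp only [hankel, of_apply, Fin.val_zero, add_zero]
  rw [sum_lowerToeplitz_mul (g := fun j => coeff j A)]
  simpa only [add_zero, range_zero, sum_empty, Fin.val_eq_zero_iff] using
    sum_range_coeff_mul_add_sum_range h i 0

theorem lowerToeplitz_mul_hankel_apply_succ_succ (h : Q * A = 1) {n : ℕ} (i k : Fin n) :
    (lowerToeplitz (coeff · Q) (n + 1) * hankel (coeff · A) (n + 1)) i.succ k.succ
      = -(hankel (fun m => coeff (m + 2) Q) n * (lowerToeplitz (coeff · A) n)ᵀ) i k := by
  simp only [mul_apply, hankel, of_apply, transpose_apply, Fin.val_succ]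
  rw [sum_lowerToeplitz_mul (g := fun j => coeff (j + (k + 1)) A)]
  conv_rhs => enter [1, 2, j]; rw [mul_comm]
  rw [sum_lowerToeplitz_mul (g := fun j => coeff (i + j + 2) Q), Fin.val_succ]
  have hsplit := sum_range_coeff_mul_add_sum_range h (i + 1) (k + 1)
  rw [if_neg (by omega)] at hsplit
  rw [eq_neg_iff_add_eq_zero, ← hsplit]
  congr 1 <;> refine sum_congr rfl fun t ht => ?_ <;> rw [mem_range] at ht <;> congr 3 <;> omega

theorem det_hankel_coeff_of_mul_eq_one (h : Q * A = 1) (hQ0 : coeff 0 Q = 1) {d : ℕ}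
    (hQ : ∀ t, d < t → coeff t Q = 0) :
    (hankel (coeff · A) d).det = (-1) ^ (d * (d - 1) / 2) * coeff d Q ^ (d - 1) := by
  rcases d with _ | n
  · simp
  set L := lowerToeplitz (coeff · Q) (n + 1)
  set K := hankel (fun m => coeff (m + 2) Q) n
  have hA0 : coeff 0 A = 1 := by
    simpa [hQ0] using sum_range_coeff_mul_add_sum_range h 0 0
  have hK : K.det = (-1) ^ (n * (n - 1) / 2) * coeff (n + 1) Q ^ n := by
    rw [det_hankel_of_eq_zero fun m hm => hQ _ (by omega)]
    rcases n with _ | n <;> simp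
  have hsub : (L * hankel (coeff · A) (n + 1)).submatrix Fin.succ Fin.succ
      = -(K * (lowerToeplitz (coeff · A) n)ᵀ) :=
    Matrix.ext fun i k => lowerToeplitz_mul_hankel_apply_succ_succ h i k
  calc (hankel (coeff · A) (n + 1)).det
      = (L * hankel (coeff · A) (n + 1)).det := by
        rw [det_mul, det_lowerToeplitz, hQ0, one_pow, one_mul]
    _ = ((L * hankel (coeff · A) (n + 1)).submatrix Fin.succ Fin.succ).det :=
        det_eq_det_submatrix_succ_of_col_zero _ (lowerToeplitz_mul_hankel_apply_zero h)
    _ = _ := by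
        rw [hsub, det_neg, det_mul, det_transpose, det_lowerToeplitz, hA0, hK, Nat.triangle_succ,
          Fintype.card_fin, Nat.add_sub_cancel]
        ring

end PowerSeries

theorem stmt_11_general {R : Type*} [CommRing R] (Γ : Polynomial R) (d : ℕ)
    (hmon : Γ.Monic) (hdeg : Γ.natDegree = d)
    (A : PowerSeries R) (hA : (Γ.reverse : PowerSeries R) * A = 1) :
    (Matrix.of fun i j : Fin d =>
        PowerSeries.coeff ((i : ℕ) + (j : ℕ)) A).det
      = (-1) ^ (d * (d - 1) / 2) * (Γ.coeff 0) ^ (d - 1) := by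
  have hlead : PowerSeries.coeff 0 (Γ.reverse : R⟦X⟧) = 1 := by
    rw [Polynomial.coeff_coe, coeff_zero_reverse, hmon.leadingCoeff]
  have hdeg_rev (t : ℕ) (ht : d < t) : PowerSeries.coeff t (Γ.reverse : R⟦X⟧) = 0 := by
    rw [Polynomial.coeff_coe]
    exact coeff_eq_zero_of_natDegree_lt (hdeg ▸ Γ.reverse_natDegree_le |>.trans_lt ht)
  have htop : PowerSeries.coeff d (Γ.reverse : R⟦X⟧) = Γ.coeff 0 := by
    rw [Polynomial.coeff_coe, coeff_reverse, hdeg, revAt_le le_rfl, Nat.sub_self]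
  rw [← htop]
  exact det_hankel_coeff_of_mul_eq_one hA hlead hdeg_rev

theorem stmt_11 {R : Type*} [CommRing R] (Γ : Polynomial R) (d : ℕ)
    (hd : 1 ≤ d) (hmon : Γ.Monic) (hdeg : Γ.natDegree = d)
    (A : PowerSeries R) (hA : (Γ.reverse : PowerSeries R) * A = 1) :
    (Matrix.of fun i j : Fin d =>
        PowerSeries.coeff ((i : ℕ) + (j : ℕ)) A).det
      = (-1) ^ (d * (d - 1) / 2) * (Γ.coeff 0) ^ (d - 1) :=
  stmt_11_general Γ d hmon hdeg A hA
end

section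
/- Let (u_n) satisfy the order-d recurrence u_{n+d} = Σ c_i u_{n+i} with characteristic polynomial Γ(x) = x^d - Σ c_i x^i, and let x^N mod Γ = Σ_{i=0}^{d-1} r_i x^i. Then u_N = Σ_{i=0}^{d-1} r_i u_i. -/
/-!
Let `φ_u : R[X] → R` be the `R`-linear functional sending `X ^ n` to `u n`. The recurrence says
that `φ_u` kills `Γ * X ^ n` for every `n`, hence the whole ideal `(Γ)`. Since `Γ` is monic,
`X ^ N ≡ X ^ N %ₘ Γ` modulo `Γ`, so `u N = φ_u (X ^ N) = φ_u (X ^ N %ₘ Γ) = ∑ r_i u_i`.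
-/

open Polynomial

namespace Polynomial

variable {R : Type*} [CommRing R]

noncomputable def seqFunctional (u : ℕ → R) : R[X] →ₗ[R] R :=
  lsum fun n ↦ LinearMap.toSpanSingleton R R (u n)

theorem seqFunctional_monomial (u : ℕ → R) (n : ℕ) (a : R) :
    seqFunctional u (monomial n a) = a * u n := by
  simp [seqFunctional]

theorem seqFunctional_eq_sum_range {u : ℕ → R} {p : R[X]} {d : ℕ} (hp : p.degree < d) :
    seqFunctional u p = ∑ i ∈ Finset.range d, p.coeff i * u i := by
  rw [seqFunctional, lsum_apply, sum_def]
  refine Finset.sum_subset (fun n hn ↦ Finset.mem_range.2 ?_) (fun n _ hn ↦ ?_)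
  · exact_mod_cast (le_degree_of_ne_zero (mem_support_iff.1 hn)).trans_lt hp
  · simp [notMem_support_iff.1 hn]

theorem seqFunctional_mul_monomial (u : ℕ → R) (p : R[X]) (n : ℕ) (a : R) :
    seqFunctional u (p * monomial n a) = a * seqFunctional (fun k ↦ u (k + n)) p := by
  induction p using Polynomial.induction_on' with
  | add p q hp hq => rw [add_mul, map_add, hp, hq, map_add, mul_add]
  | monomial k b =>
    rw [monomial_mul_monomial, seqFunctional_monomial, seqFunctional_monomial]
    ring

end Polynomial

namespace LinearRecurrence

variable {R : Type*} [CommRing R] {E : LinearRecurrence R} {u : ℕ → R}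

theorem IsSolution.shift (hu : E.IsSolution u) (n : ℕ) : E.IsSolution fun k ↦ u (k + n) :=
  fun k ↦ by simpa only [Nat.add_right_comm] using hu (k + n)

theorem seqFunctional_charPoly (hu : E.IsSolution u) : seqFunctional u E.charPoly = 0 := by
  have h0 := hu 0
  simp only [zero_add] at h0
  simp [charPoly, seqFunctional_monomial, h0]

theorem seqFunctional_charPoly_mul (hu : E.IsSolution u) (q : R[X]) :
    seqFunctional u (E.charPoly * q) = 0 := by
  induction q using Polynomial.induction_on' with
  | add p q hp hq => rw [mul_add, map_add, hp, hq, add_zero]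
  | monomial n a =>
    rw [seqFunctional_mul_monomial, seqFunctional_charPoly (hu.shift n), mul_zero]

theorem seqFunctional_modByMonic_charPoly (hu : E.IsSolution u) (p : R[X]) :
    seqFunctional u (p %ₘ E.charPoly) = seqFunctional u p := by
  conv_rhs => rw [← modByMonic_add_div p E.charPoly]
  rw [map_add, seqFunctional_charPoly_mul hu, add_zero]

theorem IsSolution.eq_sum_coeff_modByMonic_charPoly (hu : E.IsSolution u) (N : ℕ) :
    u N = ∑ i ∈ Finset.range E.order, (X ^ N %ₘ E.charPoly).coeff i * u i := by
  nontriviality R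
  have hdeg : (X ^ N %ₘ E.charPoly).degree < E.order :=
    E.charPoly_degree_eq_order ▸ degree_modByMonic_lt _ E.charPoly_monic
  rw [← seqFunctional_eq_sum_range hdeg, seqFunctional_modByMonic_charPoly hu,
    X_pow_eq_monomial, seqFunctional_monomial, one_mul]

end LinearRecurrence

theorem stmt_13_general {R : Type*} [CommRing R] (d N : ℕ) (c : Fin d → R)
    (u : ℕ → R) (hu : ∀ n : ℕ, u (n + d) = ∑ i : Fin d, c i * u (n + i)) :
    u N = ∑ i ∈ Finset.range d,
      (Polynomial.X ^ N %ₘ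
        (Polynomial.X ^ d - ∑ i : Fin d, Polynomial.C (c i) * Polynomial.X ^ (i : ℕ))).coeff i
      * u i := by
  let E : LinearRecurrence R := ⟨d, c⟩
  have hE : E.IsSolution u := hu
  have hΓ : E.charPoly = X ^ d - ∑ i : Fin d, C (c i) * X ^ (i : ℕ) := by
    simp only [LinearRecurrence.charPoly, E, ← C_mul_X_pow_eq_monomial, C_1, one_mul]
  rw [← hΓ]
  exact hE.eq_sum_coeff_modByMonic_charPoly N

theorem stmt_13 {R : Type*} [CommRing R] (d N : ℕ) (hd : 1 ≤ d) (c : Fin d → R)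
    (u : ℕ → R) (hu : ∀ n : ℕ, u (n + d) = ∑ i : Fin d, c i * u (n + i)) :
    u N = ∑ i ∈ Finset.range d,
      (Polynomial.X ^ N %ₘ
        (Polynomial.X ^ d - ∑ i : Fin d, Polynomial.C (c i) * Polynomial.X ^ (i : ℕ))).coeff i
      * u i :=
  stmt_13_general d N c u hu
end

section
/- For all n ≥ 0 and integers a, b, c: the coefficient of x^{2m} in the power series (a+bx)/(1-cx+x²) equals the coefficient of x^m in (a+(bc+a)x)/(1-(c²-2)x+x²), and the coefficient of x^{2m+1} in (a+bx)/(1-cx+x²) equals the coefficient of x^m in ((ac+b)+bx)/(1-(c²-2)x+x²). -/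
/-!
Multiplying numerator and denominator of `(a + b x) / (1 - c x + x²)` by `1 + c x + x²` turns the
denominator into `1 - (c² - 2) x² + x⁴`, a series in `x²`. Splitting the new numerator
`a + (a c + b) x + (b c + a) x² + b x³` into its even and odd parts writes the series as
`E(x²) + x O(x²)`, whose even and odd coefficients are those of `E` and `O`.
-/

open PowerSeries

namespace PowerSeries

variable {R : Type*} [CommRing R]

theorem coeff_two_mul_expand_add_X_mul_expand (f g : R⟦X⟧) (m : ℕ) :
    coeff (2 * m) (expand 2 two_ne_zero f + X * expand 2 two_ne_zero g) = coeff m f := by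
  rw [map_add, coeff_expand_mul, add_eq_left]
  cases m with
  | zero => simp
  | succ k =>
    rw [show 2 * (k + 1) = 2 * k + 1 + 1 by ring, coeff_succ_X_mul,
      coeff_expand_of_not_dvd _ _ _ (by omega)]

theorem coeff_two_mul_add_one_expand_add_X_mul_expand (f g : R⟦X⟧) (m : ℕ) :
    coeff (2 * m + 1) (expand 2 two_ne_zero f + X * expand 2 two_ne_zero g) = coeff m g := by
  rw [map_add, coeff_succ_X_mul, coeff_expand_mul, coeff_expand_of_not_dvd _ _ _ (by omega),
    zero_add]

theorem expand_two_one_sub_C_mul_X_add_X_sq (c : R) :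
    expand 2 two_ne_zero (1 - C (c ^ 2 - 2) * X + X ^ 2 : R⟦X⟧)
      = (1 - C c * X + X ^ 2) * (1 + C c * X + X ^ 2) := by
  simp only [map_add, map_sub, map_mul, map_pow, map_one, expand_C, expand_X, map_ofNat]
  ring

theorem mul_invOfUnit_eq_expand_add_X_mul_expand (a b c : R) :
    (C a + C b * X) * invOfUnit (1 - C c * X + X ^ 2) 1
      = expand 2 two_ne_zero
          ((C a + C (b * c + a) * X) * invOfUnit (1 - C (c ^ 2 - 2) * X + X ^ 2) 1)
        + X * expand 2 two_ne_zero
          ((C (a * c + b) + C b * X) * invOfUnit (1 - C (c ^ 2 - 2) * X + X ^ 2) 1) := by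
  set q : R⟦X⟧ := 1 - C c * X + X ^ 2
  set d : R⟦X⟧ := 1 - C (c ^ 2 - 2) * X + X ^ 2
  set J := expand 2 two_ne_zero (invOfUnit d 1)
  have hq : q * invOfUnit q 1 = 1 := mul_invOfUnit _ _ (by simp [q])
  have hJ : q * (1 + C c * X + X ^ 2) * J = 1 := by
    rw [← expand_two_one_sub_C_mul_X_add_X_sq, ← map_mul, mul_invOfUnit _ _ (by simp),
      map_one]
  simp only [map_add, map_mul, expand_C, expand_X]
  linear_combination (C a + C b * X) * (J * (1 + C c * X + X ^ 2) * hq - invOfUnit q 1 * hJ)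

end PowerSeries

theorem stmt_16 (a b c : ℤ) (m : ℕ) :
    PowerSeries.coeff (R := ℤ) (2 * m)
      ((PowerSeries.C (R := ℤ) a + PowerSeries.C (R := ℤ) b * PowerSeries.X) *
        PowerSeries.invOfUnit (1 - PowerSeries.C (R := ℤ) c * PowerSeries.X + PowerSeries.X ^ 2) 1)
    = PowerSeries.coeff (R := ℤ) m
      ((PowerSeries.C (R := ℤ) a + PowerSeries.C (R := ℤ) (b * c + a) * PowerSeries.X) *
        PowerSeries.invOfUnit
          (1 - PowerSeries.C (R := ℤ) (c ^ 2 - 2) * PowerSeries.X + PowerSeries.X ^ 2) 1) ∧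
    PowerSeries.coeff (R := ℤ) (2 * m + 1)
      ((PowerSeries.C (R := ℤ) a + PowerSeries.C (R := ℤ) b * PowerSeries.X) *
        PowerSeries.invOfUnit (1 - PowerSeries.C (R := ℤ) c * PowerSeries.X + PowerSeries.X ^ 2) 1)
    = PowerSeries.coeff (R := ℤ) m
      ((PowerSeries.C (R := ℤ) (a * c + b) + PowerSeries.C (R := ℤ) b * PowerSeries.X) *
        PowerSeries.invOfUnit
          (1 - PowerSeries.C (R := ℤ) (c ^ 2 - 2) * PowerSeries.X + PowerSeries.X ^ 2) 1) := by
  rw [mul_invOfUnit_eq_expand_add_X_mul_expand]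
  exact ⟨coeff_two_mul_expand_add_X_mul_expand _ _ m,
    coeff_two_mul_add_one_expand_add_X_mul_expand _ _ m⟩
end
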